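/- Let x ∈ A₊. Then there exist two non-constant geodesics γ¹, γ² ∈ G such that: (x, γ¹_s) ∈ Γ and (x, γ²_s) ∈ Γ for all s ∈ [0,1]; (γ¹_s, γ²_s) ∉ R for all s ∈ [0,1]; and φ(γ¹_s) = φ(γ²_s) for all s ∈ [0,1]. -/

import Mathlib

open Set MeasureTheory

variable {X : Type*}

/-- A geodesic parametrized on `[0,1]`. -/
def IsGeodesic [MetricSpace X] (γ : ℝ → X) : Prop :=
  ∀ s ∈ Set.Icc (0:ℝ) 1, ∀ t ∈ Set.Icc (0:ℝ) 1,
    dist (γ s) (γ t) = |s - t| * dist (γ 0) (γ 1)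

/-- `(X,d)` is a geodesic space. -/
def GeodesicSpace (X : Type*) [MetricSpace X] : Prop :=
  ∀ x y : X, ∃ γ : ℝ → X, IsGeodesic γ ∧ γ 0 = x ∧ γ 1 = y

/-- `Γ = {(x,y) : φ(x) - φ(y) = d(x,y)}`. -/
def Gamma [MetricSpace X] (φ : X → ℝ) : Set (X × X) :=
  {p | φ p.1 - φ p.2 = dist p.1 p.2}

/-- `Γ⁻¹`. -/
def GammaInv [MetricSpace X] (φ : X → ℝ) : Set (X × X) :=
  {p | (p.2, p.1) ∈ Gamma φ}

/-- The set of transport rays `R = Γ ∪ Γ⁻¹`. -/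
def Rays [MetricSpace X] (φ : X → ℝ) : Set (X × X) :=
  Gamma φ ∪ GammaInv φ

/-- `Γ(x)`. -/
def GammaOf [MetricSpace X] (φ : X → ℝ) (x : X) : Set X := {y | (x, y) ∈ Gamma φ}

/-- `Γ⁻¹(x)`. -/
def GammaInvOf [MetricSpace X] (φ : X → ℝ) (x : X) : Set X := {y | (x, y) ∈ GammaInv φ}

/-- `R(x) = Γ(x) ∪ Γ⁻¹(x)`. -/
def RayOf [MetricSpace X] (φ : X → ℝ) (x : X) : Set X := GammaOf φ x ∪ GammaInvOf φ x

/-- The transport set with end points `𝒯_e`. -/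
def Te [MetricSpace X] (φ : X → ℝ) : Set X :=
  (Prod.fst '' (Gamma φ \ {p : X × X | p.1 = p.2})) ∪
    (Prod.fst '' (GammaInv φ \ {p : X × X | p.1 = p.2}))

/-- The set of forward branching points `A₊`. -/
def Aplus [MetricSpace X] (φ : X → ℝ) : Set X :=
  {x | x ∈ Te φ ∧ ∃ z ∈ GammaOf φ x, ∃ w ∈ GammaOf φ x, (z, w) ∉ Rays φ}

/-- The set of backward branching points `A₋`. -/
def Aminus [MetricSpace X] (φ : X → ℝ) : Set X :=
  {x | x ∈ Te φ ∧ ∃ z ∈ GammaInvOf φ x, ∃ w ∈ GammaInvOf φ x, (z, w) ∉ Rays φ}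

/-- The transport set `𝒯 = 𝒯_e \ (A₊ ∪ A₋)`. -/
def Tset [MetricSpace X] (φ : X → ℝ) : Set X := Te φ \ (Aplus φ ∪ Aminus φ)

/-!
Take `z, w ∈ Γ(x)` not on a common ray, say with `φ z ≤ φ w`. Walking from `x` towards `z` down
to the level `φ w` gives `y ∈ Γ(x)` with `φ y = φ w`, and `y ≠ w` since `(w, z) ∉ Γ`. Geodesics
from `x` to `y` and to `w` have the same length, and along a geodesic with end points in `Γ` the
`1`-Lipschitz function `φ` drops at unit rate, so both pass through the same levels at the same
times. Two distinct points on one level never lie on a common ray, and near their distinct end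
points the two geodesics stay apart: their final pieces, reparametrized on `[0,1]`, are the pair.
-/

namespace IsGeodesic

variable {γ : ℝ → X}

def tail (γ : ℝ → X) (a : ℝ) : ℝ → X := fun u => γ (a + u * (1 - a))

@[simp] lemma tail_zero (a : ℝ) : tail γ a 0 = γ a := by simp [tail]

@[simp] lemma tail_one (a : ℝ) : tail γ a 1 = γ 1 := by simp [tail]

lemma tail_param_mem {a u : ℝ} (ha : a ≤ 1) (hu : u ∈ Icc (0 : ℝ) 1) :
    a + u * (1 - a) ∈ Icc a 1 :=
  ⟨by nlinarith [hu.1], by nlinarith [hu.2]⟩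

variable [MetricSpace X]

lemma dist_eq_of_le (hγ : IsGeodesic γ) {s t : ℝ} (hs : 0 ≤ s) (hst : s ≤ t) (ht : t ≤ 1) :
    dist (γ s) (γ t) = (t - s) * dist (γ 0) (γ 1) := by
  rw [hγ s ⟨hs, hst.trans ht⟩ t ⟨hs.trans hst, ht⟩, abs_sub_comm, abs_of_nonneg (by linarith)]

lemma injOn (hγ : IsGeodesic γ) (h : γ 0 ≠ γ 1) : InjOn γ (Icc 0 1) := by
  intro s hs t ht hst
  have hd := hγ s hs t ht
  rw [hst, dist_self, eq_comm, mul_eq_zero, abs_eq_zero, sub_eq_zero] at hd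
  exact hd.resolve_right (dist_ne_zero.2 h)

lemma isGeodesic_tail (hγ : IsGeodesic γ) {a : ℝ} (ha0 : 0 ≤ a) (ha1 : a ≤ 1) :
    IsGeodesic (tail γ a) := by
  intro s hs t ht
  have hIcc : Icc a 1 ⊆ Icc (0 : ℝ) 1 := Icc_subset_Icc_left ha0
  rw [tail_zero, tail_one, hγ.dist_eq_of_le ha0 ha1 le_rfl]
  unfold tail
  rw [hγ _ (hIcc (tail_param_mem ha1 hs)) _ (hIcc (tail_param_mem ha1 ht)),
    show a + s * (1 - a) - (a + t * (1 - a)) = (s - t) * (1 - a) by ring, abs_mul,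
    abs_of_nonneg (sub_nonneg.2 ha1)]
  ring

end IsGeodesic

section Transport

variable [MetricSpace X] {φ : X → ℝ}

lemma sub_le_dist_of_lipschitzWith_one (hφ : LipschitzWith 1 φ) (a b : X) :
    φ a - φ b ≤ dist a b := by
  have h := hφ.le_add_mul a b
  rw [NNReal.coe_one, one_mul] at h
  linarith

lemma swap_mem_rays {p q : X} : (q, p) ∈ Rays φ ↔ (p, q) ∈ Rays φ :=
  Or.comm

lemma eq_of_mem_gamma_of_level_eq {p q : X} (h : (p, q) ∈ Gamma φ) (hpq : φ p = φ q) : p = q :=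
  dist_eq_zero.1 (by rw [← show φ p - φ q = dist p q from h, hpq, sub_self])

lemma eq_of_mem_rays_of_level_eq {p q : X} (h : (p, q) ∈ Rays φ) (hpq : φ p = φ q) : p = q :=
  h.elim (eq_of_mem_gamma_of_level_eq · hpq) fun h => (eq_of_mem_gamma_of_level_eq h hpq.symm).symm

variable {γ : ℝ → X}

/-- Along a geodesic whose end points lie in `Γ`, `φ` decreases at unit rate with respect to
arclength: the `1`-Lipschitz bounds over `[0,t]` and `[t,1]` add up to the equality over `[0,1]`. -/
lemma IsGeodesic.level_eq (hφ : LipschitzWith 1 φ) (hγ : IsGeodesic γ)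
    (hend : (γ 0, γ 1) ∈ Gamma φ) {t : ℝ} (ht : t ∈ Icc (0 : ℝ) 1) :
    φ (γ t) = φ (γ 0) - t * dist (γ 0) (γ 1) := by
  have h0t := sub_le_dist_of_lipschitzWith_one hφ (γ 0) (γ t)
  have ht1 := sub_le_dist_of_lipschitzWith_one hφ (γ t) (γ 1)
  rw [hγ.dist_eq_of_le le_rfl ht.1 ht.2] at h0t
  rw [hγ.dist_eq_of_le ht.1 ht.2 le_rfl] at ht1
  have hsum : φ (γ 0) - φ (γ 1) = dist (γ 0) (γ 1) := hend
  linarith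

lemma IsGeodesic.mem_gamma (hφ : LipschitzWith 1 φ) (hγ : IsGeodesic γ)
    (hend : (γ 0, γ 1) ∈ Gamma φ) {s t : ℝ} (hs : 0 ≤ s) (hst : s ≤ t) (ht : t ≤ 1) :
    (γ s, γ t) ∈ Gamma φ := by
  change φ (γ s) - φ (γ t) = dist (γ s) (γ t)
  rw [hγ.level_eq hφ hend ⟨hs, hst.trans ht⟩, hγ.level_eq hφ hend ⟨hs.trans hst, ht⟩,
    hγ.dist_eq_of_le hs hst ht]
  ring

lemma exists_mem_gamma_level_eq (hgeod : GeodesicSpace X) (hφ : LipschitzWith 1 φ) {x z : X}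
    (hxz : (x, z) ∈ Gamma φ) {c : ℝ} (hzc : φ z ≤ c) (hcx : c ≤ φ x) :
    ∃ y, (x, y) ∈ Gamma φ ∧ (y, z) ∈ Gamma φ ∧ φ y = c := by
  obtain ⟨γ, hγ, rfl, rfl⟩ := hgeod x z
  have hd : φ (γ 0) - φ (γ 1) = dist (γ 0) (γ 1) := hxz
  rcases eq_or_lt_of_le (hzc.trans hcx) with hflat | hslope
  · exact ⟨γ 0, hγ.mem_gamma hφ hxz le_rfl le_rfl zero_le_one, hxz, by linarith⟩
  set σ := (φ (γ 0) - c) / (φ (γ 0) - φ (γ 1))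
  have hσ : σ ∈ Icc (0 : ℝ) 1 :=
    ⟨div_nonneg (by linarith) (by linarith), (div_le_one (by linarith)).2 (by linarith)⟩
  refine ⟨γ σ, hγ.mem_gamma hφ hxz le_rfl hσ.1 hσ.2, hγ.mem_gamma hφ hxz hσ.1 hσ.2 le_rfl, ?_⟩
  rw [hγ.level_eq hφ hxz hσ, ← hd, div_mul_cancel₀ _ (by linarith)]
  ring

end Transport

/-- At time `t` each geodesic is within `(1 - t) L` of its end point, while the end points are at
distance `D ∈ (0, 2L]`; so `a = 1 - D / 4L` works. -/
lemma IsGeodesic.exists_forall_ne_of_ne [MetricSpace X] {α β : ℝ → X} (hα : IsGeodesic α)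
    (hβ : IsGeodesic β) (h0 : α 0 = β 0) (hlen : dist (α 0) (α 1) = dist (β 0) (β 1))
    (h1 : α 1 ≠ β 1) :
    ∃ a ∈ Icc (0 : ℝ) 1, a < 1 ∧ ∀ t ∈ Icc a 1, α t ≠ β t := by
  set L := dist (α 0) (α 1)
  set D := dist (α 1) (β 1)
  have hD : 0 < D := dist_pos.2 h1
  have hDL : D ≤ 2 * L := by
    have hcross : dist (α 0) (β 1) = L := by rw [h0, ← hlen]
    linarith [dist_triangle (α 1) (α 0) (β 1), dist_comm (α 1) (α 0)]
  have hL : 0 < L := by linarith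
  have hq : D / (4 * L) ∈ Ioc (0 : ℝ) (1 / 2) :=
    ⟨by positivity, by rw [div_le_iff₀ (by positivity)]; linarith⟩
  refine ⟨1 - D / (4 * L), ⟨by linarith [hq.2], by linarith [hq.1]⟩, by linarith [hq.1],
    fun t ht heq => ?_⟩
  have ht0 : 0 ≤ t := by linarith [ht.1, hq.2]
  have hfar : D ≤ dist (α t) (α 1) + dist (β t) (β 1) := by
    rw [heq]; linarith [dist_triangle (α 1) (β t) (β 1), dist_comm (α 1) (β t)]
  rw [hα.dist_eq_of_le ht0 ht.2 le_rfl, hβ.dist_eq_of_le ht0 ht.2 le_rfl, ← hlen] at hfar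
  have hnear : (1 - t) * (4 * L) ≤ D := (le_div_iff₀ (by positivity)).1 (by linarith [ht.1])
  linarith

section Branching

variable [MetricSpace X]

def IsBranchingPair (φ : X → ℝ) (x : X) (γ₁ γ₂ : ℝ → X) : Prop :=
  IsGeodesic γ₁ ∧ IsGeodesic γ₂ ∧
    (γ₁ 0, γ₁ 1) ∈ Gamma φ ∧ (γ₂ 0, γ₂ 1) ∈ Gamma φ ∧
    γ₁ 0 ≠ γ₁ 1 ∧ γ₂ 0 ≠ γ₂ 1 ∧
    (∀ s ∈ Icc (0 : ℝ) 1, (x, γ₁ s) ∈ Gamma φ ∧ (x, γ₂ s) ∈ Gamma φ) ∧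
    (∀ s ∈ Icc (0 : ℝ) 1, (γ₁ s, γ₂ s) ∉ Rays φ) ∧
    (∀ s ∈ Icc (0 : ℝ) 1, φ (γ₁ s) = φ (γ₂ s))

variable {φ : X → ℝ}

lemma exists_isBranchingPair_of_level_eq (hgeod : GeodesicSpace X) (hφ : LipschitzWith 1 φ)
    {x y w : X} (hy : (x, y) ∈ Gamma φ) (hw : (x, w) ∈ Gamma φ) (hlevel : φ y = φ w)
    (hne : y ≠ w) : ∃ γ₁ γ₂, IsBranchingPair φ x γ₁ γ₂ := by
  obtain ⟨α, hα, rfl, rfl⟩ := hgeod x y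
  obtain ⟨β, hβ, hβ0, rfl⟩ := hgeod (α 0) w
  rw [← hβ0] at hw
  have hlen : dist (α 0) (α 1) = dist (β 0) (β 1) := by
    rw [← show φ (α 0) - φ (α 1) = _ from hy, ← show φ (β 0) - φ (β 1) = _ from hw, hβ0, hlevel]
  have hlevels : ∀ t ∈ Icc (0 : ℝ) 1, φ (α t) = φ (β t) := fun t ht => by
    rw [hα.level_eq hφ hy ht, hβ.level_eq hφ hw ht, hlen, hβ0]
  have hαne : α 0 ≠ α 1 := fun h => hne <| by
    have hβconst := eq_of_mem_gamma_of_level_eq hw (by rw [hβ0, h, hlevel])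
    rw [← hβconst, hβ0, h]
  have hβne : β 0 ≠ β 1 := fun h => hαne (dist_eq_zero.1 (by rw [hlen, h, dist_self]))
  obtain ⟨a, ha, ha1, hsep⟩ := hα.exists_forall_ne_of_ne hβ hβ0.symm hlen hne
  have hmem : ∀ s ∈ Icc (0 : ℝ) 1, a + s * (1 - a) ∈ Icc (0 : ℝ) 1 := fun s hs =>
    Icc_subset_Icc_left ha.1 (IsGeodesic.tail_param_mem ha.2 hs)
  refine ⟨IsGeodesic.tail α a, IsGeodesic.tail β a, hα.isGeodesic_tail ha.1 ha.2,
    hβ.isGeodesic_tail ha.1 ha.2, ?_, ?_, ?_, ?_, fun s hs => ⟨?_, ?_⟩,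
    fun s hs hR => ?_, fun s hs => hlevels _ (hmem s hs)⟩
  · simpa using hα.mem_gamma hφ hy ha.1 ha.2 le_rfl
  · simpa using hβ.mem_gamma hφ hw ha.1 ha.2 le_rfl
  · simpa using (hα.injOn hαne).ne ha ⟨zero_le_one, le_rfl⟩ ha1.ne
  · simpa using (hβ.injOn hβne).ne ha ⟨zero_le_one, le_rfl⟩ ha1.ne
  · exact hα.mem_gamma hφ hy le_rfl (hmem s hs).1 (hmem s hs).2
  · exact hβ0 ▸ hβ.mem_gamma hφ hw le_rfl (hmem s hs).1 (hmem s hs).2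
  · exact hsep _ (IsGeodesic.tail_param_mem ha.2 hs)
      (eq_of_mem_rays_of_level_eq hR (hlevels _ (hmem s hs)))

lemma exists_isBranchingPair_of_level_le (hgeod : GeodesicSpace X) (hφ : LipschitzWith 1 φ)
    {x z w : X} (hz : (x, z) ∈ Gamma φ) (hw : (x, w) ∈ Gamma φ) (hzw : (z, w) ∉ Rays φ)
    (hle : φ z ≤ φ w) : ∃ γ₁ γ₂, IsBranchingPair φ x γ₁ γ₂ := by
  have hwx : φ w ≤ φ x := by
    linarith [show φ x - φ w = dist x w from hw, dist_nonneg (x := x) (y := w)]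
  obtain ⟨y, hxy, hyz, hyw⟩ := exists_mem_gamma_level_eq hgeod hφ hz hle hwx
  refine exists_isBranchingPair_of_level_eq hgeod hφ hxy hw hyw ?_
  rintro rfl
  exact hzw (Or.inr hyz)

end Branching

theorem stmt6_general [MetricSpace X]
    (hgeod : GeodesicSpace X)
    (φ : X → ℝ) (hφ : LipschitzWith 1 φ)
    (x : X) (hx : x ∈ Aplus φ) :
    ∃ γ₁ γ₂ : ℝ → X, IsGeodesic γ₁ ∧ IsGeodesic γ₂ ∧
      (γ₁ 0, γ₁ 1) ∈ Gamma φ ∧ (γ₂ 0, γ₂ 1) ∈ Gamma φ ∧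
      γ₁ 0 ≠ γ₁ 1 ∧ γ₂ 0 ≠ γ₂ 1 ∧
      (∀ s ∈ Set.Icc (0:ℝ) 1, (x, γ₁ s) ∈ Gamma φ ∧ (x, γ₂ s) ∈ Gamma φ) ∧
      (∀ s ∈ Set.Icc (0:ℝ) 1, (γ₁ s, γ₂ s) ∉ Rays φ) ∧
      (∀ s ∈ Set.Icc (0:ℝ) 1, φ (γ₁ s) = φ (γ₂ s)) := by
  obtain ⟨-, z, hz, w, hw, hzw⟩ := hx
  rcases le_total (φ z) (φ w) with hle | hle
  · exact exists_isBranchingPair_of_level_le hgeod hφ hz hw hzw hle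
  · exact exists_isBranchingPair_of_level_le hgeod hφ hw hz (mt swap_mem_rays.1 hzw) hle

theorem stmt6 [MetricSpace X]
    (hproper : ProperSpace X) (hgeod : GeodesicSpace X)
    (φ : X → ℝ) (hφ : LipschitzWith 1 φ)
    (x : X) (hx : x ∈ Aplus φ) :
    ∃ γ₁ γ₂ : ℝ → X, IsGeodesic γ₁ ∧ IsGeodesic γ₂ ∧
      (γ₁ 0, γ₁ 1) ∈ Gamma φ ∧ (γ₂ 0, γ₂ 1) ∈ Gamma φ ∧
      γ₁ 0 ≠ γ₁ 1 ∧ γ₂ 0 ≠ γ₂ 1 ∧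
      (∀ s ∈ Set.Icc (0:ℝ) 1, (x, γ₁ s) ∈ Gamma φ ∧ (x, γ₂ s) ∈ Gamma φ) ∧
      (∀ s ∈ Set.Icc (0:ℝ) 1, (γ₁ s, γ₂ s) ∉ Rays φ) ∧
      (∀ s ∈ Set.Icc (0:ℝ) 1, φ (γ₁ s) = φ (γ₂ s)) :=
  stmt6_general hgeod φ hφ x hx
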